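/- Let G be a rigid group with principal series G = G_1 > G_2 > ... > G_n > G_{n+1} = 1. Then for every i = 1, ..., n: (1) if g_1, ..., g_n are elements of G with g_m in G_m \ G_{m+1} for every m = 1, ..., n, then G_i = {x in G : [x, g_i, g_{i+1}, ..., g_n] = 1}; (2) G_i = {x in G : [x, G^{(i−1)}, G^{(i)}, ..., G^{(n−1)}] = 1}. -/

import Mathlib

open scoped commutatorElement

/-!
STATEMENT 12 (Lemma, definability of the principal series): Let `G` be rigid with
principal series `G = G_1 > ... > G_{n+1} = 1`. For every `i = 1, ..., n`:
(1) if `g_m ∈ G_m \ G_{m+1}` for `m = 1, ..., n`, then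
`G_i = {x : [x, g_i, g_{i+1}, ..., g_n] = 1}` (left-normed iterated commutators);
(2) `G_i = {x : [x, G^{(i−1)}, G^{(i)}, ..., G^{(n−1)}] = 1}`.
(Indices are 0-based: `s i = G_{i+1}`, `derivedSeries G i = G^{(i)}`.)
-/


/-- A principal series of length `n`: `s 0 = G ≥ ... ≥ s n = 1`, each term normal in `G`,
strictly decreasing, with abelian factors `s i / s (i+1)` that are torsion-free as right
`ℤ[G / s i]`-modules (the module structure given by conjugation); the torsion-freeness is
expressed elementwise: a nonzero element of the group ring (given by representatives
`h j` of pairwise distinct cosets modulo `s i` and integer coefficients `m j`, not all zero)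
applied to `c ∈ s i` lies in `s (i+1)` only if `c` does. -/
def IsPrincipalSeries {G : Type*} [Group G] {n : ℕ} (s : Fin (n + 1) → Subgroup G) : Prop :=
  s 0 = ⊤ ∧ s (Fin.last n) = ⊥ ∧
  (∀ i, (s i).Normal) ∧
  (∀ i : Fin n, s i.succ < s i.castSucc) ∧
  (∀ i : Fin n, ∀ x ∈ s i.castSucc, ∀ y ∈ s i.castSucc, ⁅x, y⁆ ∈ s i.succ) ∧
  (∀ i : Fin n, ∀ c ∈ s i.castSucc, ∀ (k : ℕ) (h : Fin k → G) (m : Fin k → ℤ),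
    (∀ j l : Fin k, j ≠ l → (h j)⁻¹ * h l ∉ s i.castSucc) →
    (∃ j, m j ≠ 0) →
    (List.ofFn fun j => ((h j)⁻¹ * c * h j) ^ m j).prod ∈ s i.succ →
    c ∈ s i.succ)

/-- A group is `n`-rigid if it has a principal series of length `n`. -/
def IsRigid (G : Type*) [Group G] (n : ℕ) : Prop :=
  ∃ s : Fin (n + 1) → Subgroup G, IsPrincipalSeries s

/-- The family `t` of elements of `Gi` is linearly independent (in the factor `Gi/Gi1`)
over the group ring `ℤ[G/Gi]`, expressed elementwise. -/
def LinIndepMod {G : Type*} [Group G] (Gi Gi1 : Subgroup G) {k : ℕ} (t : Fin k → G) : Prop :=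
  (∀ j, t j ∈ Gi) ∧
  ∀ (l : ℕ) (h : Fin k → Fin l → G) (m : Fin k → Fin l → ℤ),
    (∀ j, ∀ p q : Fin l, p ≠ q → (h j p)⁻¹ * h j q ∉ Gi) →
    (List.ofFn fun j : Fin k =>
      (List.ofFn fun p : Fin l => ((h j p)⁻¹ * t j * h j p) ^ m j p).prod).prod ∈ Gi1 →
    ∀ j p, m j p = 0

/-- The rank of the factor `Gi/Gi1` as a `ℤ[G/Gi]`-module: the supremum of cardinalities
of linearly independent families. -/
noncomputable def rankAt {G : Type*} [Group G] (Gi Gi1 : Subgroup G) : ℕ∞ :=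
  ⨆ (k : ℕ) (_ : ∃ t : Fin k → G, LinIndepMod Gi Gi1 t), (k : ℕ∞)

/-- `r_i(G)` computed from a principal series `s`. -/
noncomputable def seriesRank {G : Type*} [Group G] {n : ℕ} (s : Fin (n + 1) → Subgroup G)
    (i : Fin n) : ℕ∞ :=
  rankAt (s i.castSucc) (s i.succ)


/-- Left-normed iterated commutator `[x, a_1, ..., a_k]`. -/
def iterComm {G : Type*} [Group G] : G → List G → G
  | x, [] => x
  | x, a :: l => iterComm ⁅x, a⁆ l


/-! Continue the series by `⊥` to a filtration `t` indexed by `ℕ`. Its factors are abelian, and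
torsion-freeness, applied to `g⁻¹ - 1 ≠ 0` in `ℤ[G / t k]`, says that no `g ∉ t k` fixes a nontrivial
element of `t k / t (k + 1)`: `⁅g, c⁆ ∉ t (k + 1)` for `c ∈ t k \ t (k + 1)`. Commuting with
`g_i, g_{i+1}, …` one at a time therefore moves `x ∈ t i` down one term per step into `t n = 1`,
while `x ∉ t i` stays outside the next term at every step, hence ends outside `1`.

For (2), `G^(k) ≤ t k`, and for `k < n` some element of `G^(k)` lies outside `t (k + 1)`: if
`g ∈ G^(k) \ t (k + 1)` and `x ∈ t (k + 1) \ t (k + 2)`, then `⁅g, ⁅g, x⁆⁆ ∈ G^(k+1) \ t (k + 2)`.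
Such elements serve as the `g_m` of (1). -/

section Filtration

variable {G : Type*} [Group G]

def AbelianFactors (t : ℕ → Subgroup G) : Prop :=
  ∀ k, ∀ x ∈ t k, ∀ y ∈ t k, ⁅x, y⁆ ∈ t (k + 1)

def FixedPointFreeFactors (t : ℕ → Subgroup G) : Prop :=
  ∀ k, ∀ c ∈ t k, c ∉ t (k + 1) → ∀ g ∉ t k, ⁅g, c⁆ ∉ t (k + 1)

variable {t : ℕ → Subgroup G}

theorem iterComm_mem_of_abelianFactors (ht : AbelianFactors t) {L : List G} {k : ℕ} {x : G}
    (hx : x ∈ t k) (hL : ∀ (j : ℕ) (hj : j < L.length), L[j] ∈ t (k + j)) :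
    iterComm x L ∈ t (k + L.length) := by
  induction L generalizing k x with
  | nil => exact hx
  | cons a l ih =>
    have hxa : ⁅x, a⁆ ∈ t (k + 1) := ht k x hx a (hL 0 (by simp))
    have := ih hxa fun j hj => by
      rw [add_right_comm]
      exact hL (j + 1) (by simpa using hj)
    rwa [List.length_cons, ← add_assoc, add_right_comm]

theorem iterComm_notMem_of_fixedPointFreeFactors (ht : FixedPointFreeFactors t) {L : List G}
    {k : ℕ} {x : G} (hx : x ∉ t k)
    (hL : ∀ (j : ℕ) (hj : j < L.length), L[j] ∈ t (k + j) ∧ L[j] ∉ t (k + j + 1)) :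
    iterComm x L ∉ t (k + L.length) := by
  induction L generalizing k x with
  | nil => exact hx
  | cons a l ih =>
    obtain ⟨ha, ha'⟩ := hL 0 (by simp)
    have hxa : ⁅x, a⁆ ∉ t (k + 1) := ht k a ha ha' x hx
    have := ih hxa fun j hj => by
      rw [add_right_comm]
      exact hL (j + 1) (by simpa using hj)
    rwa [List.length_cons, ← add_assoc, add_right_comm]

theorem iterComm_eq_one_iff (ht : AbelianFactors t) (ht' : FixedPointFreeFactors t) {L : List G}
    {k : ℕ} (hL : ∀ (j : ℕ) (hj : j < L.length), L[j] ∈ t (k + j) ∧ L[j] ∉ t (k + j + 1))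
    (hbot : t (k + L.length) = ⊥) (x : G) :
    iterComm x L = 1 ↔ x ∈ t k := by
  refine ⟨fun h => ?_, fun hx => ?_⟩
  · by_contra hx
    exact iterComm_notMem_of_fixedPointFreeFactors ht' hx hL (by rw [h]; exact one_mem _)
  · simpa [hbot] using iterComm_mem_of_abelianFactors ht hx fun j hj => (hL j hj).1

theorem derivedSeries_le_of_abelianFactors (h0 : t 0 = ⊤) (ht : AbelianFactors t) (k : ℕ) :
    derivedSeries G k ≤ t k := by
  induction k with
  | zero => simp [h0]
  | succ k ih =>
    rw [derivedSeries_succ, Subgroup.commutator_le]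
    exact fun x hx y hy => ht k x (ih hx) y (ih hy)

theorem exists_mem_derivedSeries_notMem [∀ k, (t k).Normal] (ht : FixedPointFreeFactors t)
    {k : ℕ} (hlt : ∀ j ≤ k, t (j + 1) < t j) :
    ∃ g ∈ derivedSeries G k, g ∉ t (k + 1) := by
  induction k with
  | zero =>
    obtain ⟨g, -, hg⟩ := SetLike.exists_of_lt (hlt 0 le_rfl)
    exact ⟨g, Subgroup.mem_top g, hg⟩
  | succ k ih =>
    obtain ⟨g, hgD, hg⟩ := ih fun j hj => hlt j (by omega)
    obtain ⟨x, hx, hx'⟩ := SetLike.exists_of_lt (hlt (k + 1) le_rfl)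
    have hcD : ⁅g, x⁆ ∈ derivedSeries G k := Subgroup.commutator_le_left _ ⊤
      (Subgroup.commutator_mem_commutator hgD (Subgroup.mem_top x))
    have hc : ⁅g, x⁆ ∈ t (k + 1) := Subgroup.commutator_le_right ⊤ _
      (Subgroup.commutator_mem_commutator (Subgroup.mem_top g) hx)
    refine ⟨⁅g, ⁅g, x⁆⁆, ?_, ht _ _ hc (ht _ x hx hx' g hg) g hg⟩
    rw [derivedSeries_succ]
    exact Subgroup.commutator_mem_commutator hgD hcD

end Filtration

section PrincipalSeries

variable {G : Type*} [Group G] {n : ℕ}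

def extendSeries (s : Fin (n + 1) → Subgroup G) (k : ℕ) : Subgroup G :=
  s (Fin.clamp k n)

theorem extendSeries_castSucc (s : Fin (n + 1) → Subgroup G) (m : Fin n) :
    extendSeries s m = s m.castSucc :=
  congrArg s (Fin.ext (by simp))

theorem extendSeries_succ (s : Fin (n + 1) → Subgroup G) (m : Fin n) :
    extendSeries s (m + 1) = s m.succ :=
  congrArg s (Fin.ext (by simp))

namespace IsPrincipalSeries

variable {s : Fin (n + 1) → Subgroup G}

theorem extendSeries_zero (hs : IsPrincipalSeries s) : extendSeries s 0 = ⊤ := hs.1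

theorem extendSeries_eq_bot (hs : IsPrincipalSeries s) {k : ℕ} (hk : n ≤ k) :
    extendSeries s k = ⊥ := by
  rw [extendSeries, Fin.clamp_eq_last _ _ hk]
  exact hs.2.1

theorem normal_extendSeries (hs : IsPrincipalSeries s) (k : ℕ) : (extendSeries s k).Normal :=
  hs.2.2.1 _

theorem extendSeries_succ_lt (hs : IsPrincipalSeries s) {k : ℕ} (hk : k < n) :
    extendSeries s (k + 1) < extendSeries s k := by
  obtain ⟨m, rfl⟩ : ∃ m : Fin n, (m : ℕ) = k := ⟨⟨k, hk⟩, rfl⟩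
  rw [extendSeries_castSucc, extendSeries_succ]
  exact hs.2.2.2.1 m

theorem mem_succ_of_commutator_mem (hs : IsPrincipalSeries s) (m : Fin n) {c g : G}
    (hc : c ∈ s m.castSucc) (hg : g ∉ s m.castSucc) (hgc : ⁅g, c⁆ ∈ s m.succ) : c ∈ s m.succ := by
  -- `⁅g, c⁆ = (g c g⁻¹) c⁻¹` is `c` acted on by `g⁻¹ - 1`
  refine hs.2.2.2.2.2 m c hc 2 ![g⁻¹, 1] ![1, -1] ?_ ⟨0, one_ne_zero⟩ ?_
  · intro j l hjl
    fin_cases j <;> fin_cases l <;> simp_all [inv_mem_iff]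
  · simpa [List.ofFn_succ, commutatorElement_def, mul_assoc] using hgc

theorem abelianFactors_extendSeries (hs : IsPrincipalSeries s) :
    AbelianFactors (extendSeries s) := by
  intro k
  rcases lt_or_ge k n with hk | hk
  · obtain ⟨m, rfl⟩ : ∃ m : Fin n, (m : ℕ) = k := ⟨⟨k, hk⟩, rfl⟩
    rw [extendSeries_castSucc, extendSeries_succ]
    exact hs.2.2.2.2.1 m
  · simp [hs.extendSeries_eq_bot hk]

theorem fixedPointFreeFactors_extendSeries (hs : IsPrincipalSeries s) :
    FixedPointFreeFactors (extendSeries s) := by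
  intro k
  rcases lt_or_ge k n with hk | hk
  · obtain ⟨m, rfl⟩ : ∃ m : Fin n, (m : ℕ) = k := ⟨⟨k, hk⟩, rfl⟩
    rw [extendSeries_castSucc, extendSeries_succ]
    exact fun c hc hc' g hg hgc => hc' (hs.mem_succ_of_commutator_mem m hc hg hgc)
  · simp [hs.extendSeries_eq_bot hk]

end IsPrincipalSeries

end PrincipalSeries

theorem stmt12 {G : Type} [Group G] (n : ℕ) (s : Fin (n + 1) → Subgroup G)
    (hs : IsPrincipalSeries s) (i : Fin n) :
    (∀ g : Fin n → G, (∀ m : Fin n, g m ∈ s m.castSucc ∧ g m ∉ s m.succ) →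
      ∀ x : G, x ∈ s i.castSucc ↔
        iterComm x (((List.finRange n).drop i.val).map g) = 1) ∧
    (∀ x : G, x ∈ s i.castSucc ↔
      ∀ y : Fin (n - i.val) → G, (∀ j, y j ∈ derivedSeries G (i.val + j.val)) →
        iterComm x (List.ofFn y) = 1) := by
  have ht := hs.abelianFactors_extendSeries
  have ht' := hs.fixedPointFreeFactors_extendSeries
  have hD := derivedSeries_le_of_abelianFactors hs.extendSeries_zero ht
  have hbot : extendSeries s n = ⊥ := hs.extendSeries_eq_bot le_rfl
  have := hs.normal_extendSeries
  rw [← extendSeries_castSucc s i]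
  refine ⟨fun g hg x => ?_, fun x => ⟨fun hx y hy => ?_, fun h => ?_⟩⟩
  · refine (iterComm_eq_one_iff ht ht' (fun j hj => ?_) (by simpa using hbot) x).symm
    have hij : i + j < n := by simp at hj; omega
    have hgj := hg ⟨i + j, hij⟩
    rw [← extendSeries_castSucc s, ← extendSeries_succ s] at hgj
    simpa using hgj
  · have hL (j : ℕ) (hj : j < (List.ofFn y).length) : (List.ofFn y)[j] ∈ extendSeries s (i + j) :=
      hD _ (by simpa using hy ⟨j, by simpa using hj⟩)
    simpa [hbot] using iterComm_mem_of_abelianFactors ht hx hL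
  · choose y hyD hy using fun j : Fin (n - i) => exists_mem_derivedSeries_notMem ht'
      (k := i + j) fun l _ => hs.extendSeries_succ_lt (by omega)
    refine (iterComm_eq_one_iff ht ht' (fun j hj => ?_) (by simpa using hbot) x).1 (h y hyD)
    simp only [List.length_ofFn] at hj
    simpa using ⟨hD _ (hyD ⟨j, hj⟩), hy ⟨j, hj⟩⟩
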